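/- arXiv:2405.16479 — 5 statements merged into one kernel-verified Lean document; each statement's English description precedes it below -/
import Mathlib

section
/- Let n be a positive natural number and let x, y : Fin n → ℝ be vectors with 0 < x i ≤ 1 and 0 < y i ≤ 1 for every i. Then ∑ i, (x i − y i) * (Real.log (x i) − Real.log (y i)) ≥ ∑ i, (x i − y i)^2. -/
/- For `b ≤ a` in `(0, 1]`, `log (b / a) ≤ b / a - 1` gives
`log a - log b ≥ (a - b) / a ≥ a - b`: the function `log t - t` is monotone on `(0, 1]`.
A monotone `g` satisfies `0 ≤ (a - b) * (g a - g b)`, which for `g = log - id` is the claimed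
inequality term by term. -/

open Finset Real

lemma monotoneOn_log_sub_self : MonotoneOn (fun t => log t - t) (Set.Ioc 0 1) := by
  rintro b ⟨hb, -⟩ a ⟨ha, ha1⟩ hba
  have hlog : log b - log a ≤ b / a - 1 := by
    rw [← log_div hb.ne' ha.ne']
    exact log_le_sub_one_of_pos (div_pos hb ha)
  have hdiv : a - b ≤ (a - b) / a := by
    rw [le_div_iff₀ ha]
    nlinarith
  have hsplit : (a - b) / a = 1 - b / a := by field_simp
  dsimp only
  linarith

lemma sq_sub_le_sub_mul_log_sub_log {a b : ℝ} (ha : a ∈ Set.Ioc 0 1) (hb : b ∈ Set.Ioc 0 1) :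
    (a - b) ^ 2 ≤ (a - b) * (log a - log b) := by
  have h := (monovaryOn_id_iff.mpr monotoneOn_log_sub_self).sub_mul_sub_nonneg ha hb
  simp only [id] at h
  nlinarith

theorem stmt_0_general (n : ℕ) (x y : Fin n → ℝ)
    (hx : ∀ i, 0 < x i ∧ x i ≤ 1) (hy : ∀ i, 0 < y i ∧ y i ≤ 1) :
    ∑ i, (x i - y i) * (Real.log (x i) - Real.log (y i)) ≥ ∑ i, (x i - y i) ^ 2 :=
  sum_le_sum fun i _ => sq_sub_le_sub_mul_log_sub_log (hx i) (hy i)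

theorem stmt_0 (n : ℕ) (hn : 0 < n) (x y : Fin n → ℝ)
    (hx : ∀ i, 0 < x i ∧ x i ≤ 1) (hy : ∀ i, 0 < y i ∧ y i ≤ 1) :
    ∑ i, (x i - y i) * (Real.log (x i) - Real.log (y i)) ≥ ∑ i, (x i - y i) ^ 2 :=
  stmt_0_general n x y hx hy
end

section
/- Let n be a positive natural number, s : ℝ, and let Z ⊆ ℝⁿ (as EuclideanSpace ℝ (Fin n)) be a convex set contained in {z | (∀ i, 0 < z i ∧ z i ≤ 1) ∧ ∑ i, z i = s}. Let f : ℝⁿ → ℝ be differentiable with gradient ∇f Lipschitz with constant L ≥ 0, let h : ℝⁿ → ℝ be convex and differentiable on an open set containing Z, and let β > 0. Suppose z₀ ∈ Z and z₁ ∈ Z minimizes over Z the function G(z) = ⟪∇f(z₀), z⟫ + h(z) + (1/β) * D(z, z₀), where D(x, y) = ∑ i, x i * (Real.log (x i) − Real.log (y i)). Then f(z₁) + h(z₁) ≤ f(z₀) + h(z₀) − (1/β − L/2) * ‖z₁ − z₀‖². -/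
/-!
By the descent lemma for an `L`-smooth `f`, `f z₁` is at most its linearization at `z₀` plus
`L / 2 * ‖z₁ - z₀‖ ^ 2`. Comparing `z₁` with the points of the segment towards `z₀`, on which the
convex `h` lies below its chord, gives the first-order condition
`h z₁ - h z₀ ≤ ⟪∇f z₀, z₀ - z₁⟫ + (1 / β) Δ`, where `Δ` is the derivative of `D (·) z₀` at `z₁` in
the direction `z₀ - z₁`. Since `z₀` and `z₁` have the same coordinate sum,
`Δ = -∑ (z₁ i - z₀ i) (log (z₁ i) - log (z₀ i))`, and as `log` has slope at least `1` on `(0, 1]`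
this is at most `-‖z₁ - z₀‖ ^ 2`.
-/

open Finset Real
open scoped NNReal InnerProductSpace

theorem Real.sub_le_log_sub_log {a b : ℝ} (hb : 0 < b) (hba : b ≤ a) (ha : a ≤ 1) :
    a - b ≤ log a - log b := by
  have ha₀ : 0 < a := hb.trans_le hba
  calc a - b ≤ (a - b) / a := by
        rw [le_div_iff₀ ha₀]; nlinarith
    _ = 1 - (a / b)⁻¹ := by field_simp
    _ ≤ log (a / b) := one_sub_inv_le_log_of_pos (div_pos ha₀ hb)
    _ = log a - log b := log_div ha₀.ne' hb.ne'

theorem Real.sq_sub_le_mul_log_sub_log {a b : ℝ} (ha : 0 < a) (ha₁ : a ≤ 1) (hb : 0 < b)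
    (hb₁ : b ≤ 1) : (a - b) ^ 2 ≤ (a - b) * (log a - log b) := by
  rcases le_total b a with hba | hab
  · rw [sq]
    exact mul_le_mul_of_nonneg_left (sub_le_log_sub_log hb hba ha₁) (sub_nonneg.2 hba)
  · have := mul_le_mul_of_nonneg_left (sub_le_log_sub_log ha hab hb₁) (sub_nonneg.2 hab)
    linarith

theorem EuclideanSpace.norm_sub_sq_le_sum_mul_log_sub_log {ι : Type*} [Fintype ι]
    {x y : EuclideanSpace ℝ ι} (hx : ∀ i, 0 < x i ∧ x i ≤ 1) (hy : ∀ i, 0 < y i ∧ y i ≤ 1) :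
    ‖x - y‖ ^ 2 ≤ ∑ i, (x i - y i) * (log (x i) - log (y i)) := by
  rw [EuclideanSpace.norm_sq_eq]
  gcongr with i
  simpa using sq_sub_le_mul_log_sub_log (hx i).1 (hx i).2 (hy i).1 (hy i).2

theorem hasDerivAt_sum_mul_log_sub_log_line {ι : Type*} [Fintype ι] {x : ι → ℝ}
    (hx : ∀ i, 0 < x i) (v b : ι → ℝ) :
    HasDerivAt (fun t => ∑ i, (x i + t * v i) * (log (x i + t * v i) - log (b i)))
      (∑ i, v i * (log (x i) - log (b i) + 1)) 0 := by
  refine HasDerivAt.fun_sum fun i _ => ?_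
  have hline : HasDerivAt (fun t => x i + t * v i) (v i) 0 := by
    simpa using ((hasDerivAt_id (0 : ℝ)).mul_const (v i)).const_add (x i)
  have hne : x i + 0 * v i ≠ 0 := by simpa using (hx i).ne'
  refine (hline.fun_mul ((hline.log hne).sub_const (log (b i)))).congr_deriv ?_
  rw [zero_mul, add_zero, mul_div_cancel₀ _ (hx i).ne']
  ring

theorem LipschitzWith.le_add_inner_gradient_add {E : Type*} [NormedAddCommGroup E]
    [InnerProductSpace ℝ E] [CompleteSpace E] {f : E → ℝ} {K : ℝ≥0} (hf : Differentiable ℝ f)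
    (hK : LipschitzWith K (gradient f)) (x y : E) :
    f y ≤ f x + ⟪gradient f x, y - x⟫_ℝ + K / 2 * ‖y - x‖ ^ 2 := by
  set v := y - x
  let φ : ℝ → ℝ := fun t => f (x + t • v) - t * ⟪gradient f x, v⟫_ℝ - K / 2 * t ^ 2 * ‖v‖ ^ 2
  have hφ : ∀ t, HasDerivAt φ
      (⟪gradient f (x + t • v), v⟫_ℝ - ⟪gradient f x, v⟫_ℝ - K * t * ‖v‖ ^ 2) t := by
    intro t
    have hline : HasDerivAt (fun t : ℝ => x + t • v) v t := by
      simpa using ((hasDerivAt_id t).smul_const v).const_add x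
    have hcomp := (hf (x + t • v)).hasGradientAt.hasFDerivAt.comp_hasDerivAt t hline
    rw [InnerProductSpace.toDual_apply_apply] at hcomp
    refine ((hcomp.sub ((hasDerivAt_id t).mul_const ⟪gradient f x, v⟫_ℝ)).sub
      (((hasDerivAt_pow 2 t).const_mul (K / 2 : ℝ)).mul_const (‖v‖ ^ 2))).congr_deriv ?_
    simp only [Nat.cast_ofNat]
    ring
  have hφ' : ∀ t ∈ interior (Set.Ici (0 : ℝ)),
      ⟪gradient f (x + t • v), v⟫_ℝ - ⟪gradient f x, v⟫_ℝ - K * t * ‖v‖ ^ 2 ≤ 0 := by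
    intro t ht
    rw [interior_Ici, Set.mem_Ioi] at ht
    have hlip : ‖gradient f (x + t • v) - gradient f x‖ ≤ K * (t * ‖v‖) := by
      simpa [dist_eq_norm, norm_smul, abs_of_pos ht] using hK.dist_le_mul (x + t • v) x
    rw [sub_nonpos]
    calc ⟪gradient f (x + t • v), v⟫_ℝ - ⟪gradient f x, v⟫_ℝ
        = ⟪gradient f (x + t • v) - gradient f x, v⟫_ℝ := (inner_sub_left ..).symm
      _ ≤ ‖gradient f (x + t • v) - gradient f x‖ * ‖v‖ := real_inner_le_norm ..
      _ ≤ K * (t * ‖v‖) * ‖v‖ := by gcongr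
      _ = K * t * ‖v‖ ^ 2 := by ring
  have hanti := antitoneOn_of_hasDerivWithinAt_nonpos (convex_Ici 0)
    (fun t _ => (hφ t).continuousAt.continuousWithinAt)
    (fun t _ => (hφ t).hasDerivWithinAt) hφ'
  have := hanti Set.self_mem_Ici (zero_le_one' ℝ) zero_le_one
  simp only [φ, v, zero_smul, add_zero, one_smul, add_sub_cancel, zero_mul, sub_zero, one_pow,
    mul_one, one_mul] at this
  simp only [v]
  linarith

theorem ConvexOn.sub_le_of_isMinOn_add {E : Type*} [AddCommGroup E] [Module ℝ E] {Z : Set E}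
    {h Φ : E → ℝ} (hh : ConvexOn ℝ Z h) {x y : E} (hx : x ∈ Z) (hy : y ∈ Z)
    (hmin : ∀ w ∈ Z, h x + Φ x ≤ h w + Φ w) {d : ℝ}
    (hΦ : HasDerivAt (fun t : ℝ => Φ (x + t • (y - x))) d 0) :
    h x - h y ≤ d := by
  let ψ : ℝ → ℝ := fun t => (1 - t) * h x + t * h y + Φ (x + t • (y - x))
  have hψ : HasDerivAt ψ (h y - h x + d) 0 := by
    refine ((((hasDerivAt_id (0 : ℝ)).const_sub 1).mul_const (h x)).add
      ((hasDerivAt_id (0 : ℝ)).mul_const (h y)) |>.add hΦ).congr_deriv ?_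
    ring
  have hmin_ψ : IsLocalMinOn ψ (Set.Icc 0 1) 0 := by
    refine (isMinOn_iff.2 fun t ht => ?_).localize
    have hseg : h (x + t • (y - x)) ≤ (1 - t) * h x + t * h y := by
      have := hh.2 hx hy (sub_nonneg.2 ht.2) ht.1 (sub_add_cancel 1 t)
      simpa [smul_sub, sub_smul, smul_eq_mul, add_comm, add_sub, sub_add] using this
    have := hmin _ (hh.1.add_smul_sub_mem hx hy ht)
    simp only [ψ, sub_zero, one_mul, zero_mul, add_zero, zero_smul]
    linarith
  have hone : (1 : ℝ) ∈ posTangentConeAt (Set.Icc 0 1) 0 :=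
    mem_posTangentConeAt_of_segment_subset (by simp [segment_eq_Icc])
  have := hmin_ψ.hasFDerivWithinAt_nonneg hψ.hasFDerivAt.hasFDerivWithinAt hone
  simp only [ContinuousLinearMap.toSpanSingleton_apply, smul_eq_mul, one_mul] at this
  linarith

theorem stmt_1_general (n : ℕ) (s : ℝ)
    (Z : Set (EuclideanSpace ℝ (Fin n))) (hZconv : Convex ℝ Z)
    (hZsub : Z ⊆ {z : EuclideanSpace ℝ (Fin n) | (∀ i, 0 < z i ∧ z i ≤ 1) ∧ ∑ i, z i = s})
    (f h : EuclideanSpace ℝ (Fin n) → ℝ)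
    (L : ℝ) (hL : 0 ≤ L)
    (hf : Differentiable ℝ f)
    (hfL : LipschitzWith L.toNNReal (gradient f))
    (hhconv : ConvexOn ℝ Set.univ h)
    (β : ℝ) (hβ : 0 < β)
    (D : EuclideanSpace ℝ (Fin n) → EuclideanSpace ℝ (Fin n) → ℝ)
    (hD : ∀ x y, D x y = ∑ i, x i * (Real.log (x i) - Real.log (y i)))
    (z₀ z₁ : EuclideanSpace ℝ (Fin n)) (hz₀ : z₀ ∈ Z) (hz₁ : z₁ ∈ Z)
    (hmin : ∀ w ∈ Z,
      inner ℝ (gradient f z₀) z₁ + h z₁ + (1 / β) * D z₁ z₀ ≤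
        (inner ℝ (gradient f z₀) w + h w + (1 / β) * D w z₀ : ℝ)) :
    f z₁ + h z₁ ≤ f z₀ + h z₀ - (1 / β - L / 2) * ‖z₁ - z₀‖ ^ 2 := by
  obtain ⟨hz₀_mem, hz₀_sum⟩ := hZsub hz₀
  obtain ⟨hz₁_mem, hz₁_sum⟩ := hZsub hz₁
  set g := gradient f z₀
  set Δ := ∑ i, (z₀ i - z₁ i) * (log (z₁ i) - log (z₀ i) + 1)
  have hdesc : f z₁ ≤ f z₀ + ⟪g, z₁ - z₀⟫_ℝ + L / 2 * ‖z₁ - z₀‖ ^ 2 := by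
    have := hfL.le_add_inner_gradient_add hf z₀ z₁
    rwa [Real.coe_toNNReal L hL] at this
  have hopt : h z₁ - h z₀ ≤ ⟪g, z₀ - z₁⟫_ℝ + 1 / β * Δ := by
    refine (hhconv.subset (Set.subset_univ Z) hZconv).sub_le_of_isMinOn_add
      (Φ := fun w => ⟪g, w⟫_ℝ + 1 / β * D w z₀) hz₁ hz₀ (fun w hw => by linarith [hmin w hw]) ?_
    simp only [hD, inner_add_right, inner_smul_right, PiLp.add_apply, PiLp.smul_apply,
      PiLp.sub_apply, smul_eq_mul]
    exact ((hasDerivAt_id 0).mul_const _ |>.const_add _).add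
      ((hasDerivAt_sum_mul_log_sub_log_line (fun i => (hz₁_mem i).1) _ _).const_mul _)
      |>.congr_deriv (by simp [Δ])
  have hΔ : Δ ≤ -‖z₁ - z₀‖ ^ 2 := by
    have hmass : ∑ i, (z₀ i - z₁ i) = 0 := by rw [sum_sub_distrib, hz₀_sum, hz₁_sum, sub_self]
    have hΔ_eq : Δ = -∑ i, (z₁ i - z₀ i) * (log (z₁ i) - log (z₀ i)) := by
      simp only [Δ, mul_add, mul_one, sum_add_distrib, hmass, add_zero, ← sum_neg_distrib]
      exact sum_congr rfl fun i _ => by ring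
    rw [hΔ_eq, neg_le_neg_iff]
    exact EuclideanSpace.norm_sub_sq_le_sum_mul_log_sub_log hz₁_mem hz₀_mem
  have hβΔ : 1 / β * Δ ≤ 1 / β * -‖z₁ - z₀‖ ^ 2 := by gcongr
  have hinner : ⟪g, z₀ - z₁⟫_ℝ = -⟪g, z₁ - z₀⟫_ℝ := by rw [← inner_neg_right, neg_sub]
  linarith

theorem stmt_1 (n : ℕ) (hn : 0 < n) (s : ℝ)
    (Z : Set (EuclideanSpace ℝ (Fin n))) (hZconv : Convex ℝ Z)
    (hZsub : Z ⊆ {z : EuclideanSpace ℝ (Fin n) | (∀ i, 0 < z i ∧ z i ≤ 1) ∧ ∑ i, z i = s})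
    (f h : EuclideanSpace ℝ (Fin n) → ℝ)
    (L : ℝ) (hL : 0 ≤ L)
    (hf : Differentiable ℝ f)
    (hfL : LipschitzWith L.toNNReal (gradient f))
    (U : Set (EuclideanSpace ℝ (Fin n))) (hU : IsOpen U) (hZU : Z ⊆ U)
    (hh : DifferentiableOn ℝ h U)
    (hhconv : ConvexOn ℝ Set.univ h)
    (β : ℝ) (hβ : 0 < β)
    (D : EuclideanSpace ℝ (Fin n) → EuclideanSpace ℝ (Fin n) → ℝ)
    (hD : ∀ x y, D x y = ∑ i, x i * (Real.log (x i) - Real.log (y i)))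
    (z₀ z₁ : EuclideanSpace ℝ (Fin n)) (hz₀ : z₀ ∈ Z) (hz₁ : z₁ ∈ Z)
    (hmin : ∀ w ∈ Z,
      inner ℝ (gradient f z₀) z₁ + h z₁ + (1 / β) * D z₁ z₀ ≤
        (inner ℝ (gradient f z₀) w + h w + (1 / β) * D w z₀ : ℝ)) :
    f z₁ + h z₁ ≤ f z₀ + h z₀ - (1 / β - L / 2) * ‖z₁ - z₀‖ ^ 2 :=
  stmt_1_general n s Z hZconv hZsub f h L hL hf hfL hhconv β hβ D hD z₀ z₁ hz₀ hz₁ hmin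
end

section
/- Let n be a positive natural number, s : ℝ, and let Z ⊆ ℝⁿ (as EuclideanSpace ℝ (Fin n)) be a convex set contained in {z | (∀ i, 0 < z i ∧ z i ≤ 1) ∧ ∑ i, z i = s}. Let f : ℝⁿ → ℝ be differentiable with gradient ∇f Lipschitz with constant L ≥ 0, let h : ℝⁿ → ℝ be convex and differentiable on an open set containing Z, and let β > 0 satisfy β < 2/L (taking this as β > 0 with L*β < 2). Suppose F = f + h is bounded below on Z by F⋆, and z : ℕ → Z is a sequence such that for every t, z (t+1) minimizes over Z the function G_t(w) = ⟪∇f(z t), w⟫ + h(w) + (1/β) * D(w, z t), where D(x, y) = ∑ i, x i * (Real.log (x i) − Real.log (y i)). Then for every T ≥ 1, (1/T) * ∑_{t=0}^{T−1} ‖z (t+1) − z t‖² ≤ (F(z 0) − F⋆) / (T * (1/β − L/2)). -/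
/-!
The objective of the proximal step, `w ↦ ⟪∇f (z t), w⟫ + h w + β⁻¹ D(w, z t)`, is
`β⁻¹`-strongly convex on `Z`, because `u ↦ u log u - u² / 2` is convex on `(0, 1]`; so its
minimiser `z (t + 1)` beats `z t` by `β⁻¹ / 2 ‖z (t + 1) - z t‖²`. The same strong convexity,
applied to `D(·, z t)`, which is minimal (zero) at `z t` on `Z` by Gibbs' inequality since all
points of `Z` have the same coordinate sum, gives the Pinsker-type bound
`‖z (t + 1) - z t‖² / 2 ≤ D(z (t + 1), z t)`. With the descent lemma for the `L`-smooth `f`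
this yields `F (z (t + 1)) + (1 / β - L / 2) ‖z (t + 1) - z t‖² ≤ F (z t)`, and telescoping
against `F⋆` gives the rate.
-/

open Finset Real Filter Topology
open scoped NNReal

lemma StrongConvexOn.subset {E : Type*} [NormedAddCommGroup E] [NormedSpace ℝ E] {s t : Set E}
    {m : ℝ} {f : E → ℝ} (hf : StrongConvexOn t m f) (hst : s ⊆ t) (hs : Convex ℝ s) :
    StrongConvexOn s m f :=
  ⟨hs, fun _ hx _ hy ↦ hf.2 (hst hx) (hst hy)⟩

theorem StrongConvexOn.add_sq_le_of_isMinOn {E : Type*} [NormedAddCommGroup E] [NormedSpace ℝ E]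
    {s : Set E} {m : ℝ} {f : E → ℝ} {x y : E} (hf : StrongConvexOn s m f) (hx : x ∈ s)
    (hy : y ∈ s) (hmin : IsMinOn f s x) :
    f x + m / 2 * ‖x - y‖ ^ 2 ≤ f y := by
  -- compare `x` with `a • x + (1 - a) • y` and let `a → 1`
  have hscaled : ∀ a ∈ Set.Ioo (0 : ℝ) 1, a * (m / 2 * ‖x - y‖ ^ 2) ≤ f y - f x := by
    rintro a ⟨ha0, ha1⟩
    have hb : 0 < 1 - a := by linarith
    have hconv := hf.2 hx hy ha0.le hb.le (add_sub_cancel a 1)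
    have hle := hmin (hf.1 hx hy ha0.le hb.le (add_sub_cancel a 1))
    simp only [smul_eq_mul, Set.mem_ofPred_eq] at hconv hle
    refine le_of_mul_le_mul_left ?_ hb
    linarith
  have hlim : Tendsto (fun a : ℝ ↦ a * (m / 2 * ‖x - y‖ ^ 2)) (𝓝[<] 1)
      (𝓝 (m / 2 * ‖x - y‖ ^ 2)) := by
    have := ((continuous_mul_const (m / 2 * ‖x - y‖ ^ 2)).tendsto 1).mono_left
      (nhdsWithin_le_nhds (s := Set.Iio 1))
    rwa [one_mul] at this
  have := le_of_tendsto hlim (eventually_of_mem (Ioo_mem_nhdsLT zero_lt_one) hscaled)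
  linarith

theorem le_add_inner_gradient_add_sq_of_lipschitzWith {E : Type*} [NormedAddCommGroup E]
    [InnerProductSpace ℝ E] [CompleteSpace E] {f : E → ℝ} {K : ℝ≥0} (hf : Differentiable ℝ f)
    (hfK : LipschitzWith K (gradient f)) (x y : E) :
    f x ≤ f y + inner ℝ (gradient f y) (x - y) + K / 2 * ‖x - y‖ ^ 2 := by
  set d := x - y
  set φ : ℝ → ℝ := fun t ↦
    f (y + t • d) - t * inner ℝ (gradient f y) d - K / 2 * t ^ 2 * ‖d‖ ^ 2
  have hline : ∀ t : ℝ, HasDerivAt (fun t : ℝ ↦ y + t • d) d t := fun t ↦ by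
    simpa using ((hasDerivAt_id t).smul_const d).const_add y
  have hφ : ∀ t : ℝ, HasDerivAt φ
      (inner ℝ (gradient f (y + t • d) - gradient f y) d - K * t * ‖d‖ ^ 2) t := fun t ↦ by
    have hft := (hasGradientAt_iff_hasFDerivAt.1 (hf (y + t • d)).hasGradientAt).comp_hasDerivAt
      t (hline t)
    refine ((hft.sub ((hasDerivAt_id t).mul_const _)).sub
      (((hasDerivAt_pow 2 t).const_mul (K / 2 : ℝ)).mul_const (‖d‖ ^ 2))).congr_deriv ?_
    simp only [InnerProductSpace.toDual_apply_apply, inner_sub_left]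
    push_cast
    ring
  have hφ' : ∀ t ∈ Set.Ioi (0 : ℝ),
      inner ℝ (gradient f (y + t • d) - gradient f y) d - K * t * ‖d‖ ^ 2 ≤ 0 := by
    intro t ht
    have hgrad : ‖gradient f (y + t • d) - gradient f y‖ ≤ K * (t * ‖d‖) := by
      simpa [dist_eq_norm, norm_smul, abs_of_pos (Set.mem_Ioi.1 ht)] using
        hfK.dist_le_mul (y + t • d) y
    have := (real_inner_le_norm _ _).trans (mul_le_mul_of_nonneg_right hgrad (norm_nonneg d))
    linarith
  have hanti : AntitoneOn φ (Set.Ici 0) := antitoneOn_of_hasDerivWithinAt_nonpos (convex_Ici 0)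
    (fun t _ ↦ (hφ t).continuousAt.continuousWithinAt)
    (fun t _ ↦ (hφ t).hasDerivWithinAt) (by simpa only [interior_Ici] using hφ')
  have := hanti Set.self_mem_Ici (Set.mem_Ici.2 zero_le_one) zero_le_one
  simp only [φ, d, one_smul, zero_smul, add_zero, add_sub_cancel] at this
  linarith

lemma convexOn_mul_log_sub_sq (c : ℝ) :
    ConvexOn ℝ (Set.Ioc 0 1) fun u : ℝ ↦ u * (log u - log c) - u ^ 2 / 2 := by
  have hderiv : ∀ u : ℝ, 0 < u → HasDerivAt (fun u ↦ u * (log u - log c) - u ^ 2 / 2)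
      (log u + 1 - log c - u) u := fun u hu ↦ by
    refine (((hasDerivAt_id' u).mul ((hasDerivAt_log hu.ne').sub_const (log c))).sub
      ((hasDerivAt_pow 2 u).div_const 2)).congr_deriv ?_
    field_simp
    ring
  refine convexOn_of_hasDerivWithinAt2_nonneg (convex_Ioc 0 1)
    (f' := fun u ↦ log u + 1 - log c - u) (f'' := fun u ↦ u⁻¹ - 1)
    (fun u hu ↦ (hderiv u hu.1).continuousAt.continuousWithinAt) ?_ ?_ ?_ <;>
    simp only [interior_Ioc]
  · exact fun u hu ↦ (hderiv u hu.1).hasDerivWithinAt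
  · exact fun u hu ↦ ((((hasDerivAt_log hu.1.ne').add_const 1).sub_const (log c)).sub
      (hasDerivAt_id u)).hasDerivWithinAt
  · exact fun u hu ↦ sub_nonneg.2 <| (one_le_inv₀ hu.1).2 hu.2.le

section RelEntropy

variable {ι : Type*} [Fintype ι]

noncomputable def relEntropy (x y : EuclideanSpace ℝ ι) : ℝ :=
  ∑ i, x i * (log (x i) - log (y i))

@[simp]
lemma relEntropy_self (x : EuclideanSpace ℝ ι) : relEntropy x x = 0 := by
  simp [relEntropy]

lemma relEntropy_nonneg {x y : EuclideanSpace ℝ ι} (hx : ∀ i, 0 < x i) (hy : ∀ i, 0 < y i)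
    (hxy : ∑ i, x i = ∑ i, y i) : 0 ≤ relEntropy x y := by
  rw [← sub_eq_zero.2 hxy, ← sum_sub_distrib]
  refine sum_le_sum fun i _ ↦ ?_
  have hlog := log_le_sub_one_of_pos (div_pos (hy i) (hx i))
  rw [log_div (hy i).ne' (hx i).ne', le_sub_iff_add_le, le_div_iff₀ (hx i)] at hlog
  linarith

lemma convexOn_sum_apply {s : Set ℝ} {g : ι → ℝ → ℝ} (hs : Convex ℝ s)
    (hg : ∀ i, ConvexOn ℝ s (g i)) :
    ConvexOn ℝ {w : EuclideanSpace ℝ ι | ∀ i, w i ∈ s} fun w ↦ ∑ i, g i (w i) := by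
  refine ⟨fun x hx y hy a b ha hb hab i ↦ ?_, fun x hx y hy a b ha hb hab ↦ ?_⟩
  · simpa using hs (hx i) (hy i) ha hb hab
  · simpa [mul_sum, ← sum_add_distrib] using
      sum_le_sum fun i _ ↦ (hg i).2 (hx i) (hy i) ha hb hab

lemma strongConvexOn_relEntropy (y : EuclideanSpace ℝ ι) :
    StrongConvexOn {w : EuclideanSpace ℝ ι | ∀ i, w i ∈ Set.Ioc 0 1} 1
      fun w ↦ relEntropy w y := by
  refine strongConvexOn_iff_convex.2 <|
    (convexOn_sum_apply (convex_Ioc 0 1) fun i ↦ convexOn_mul_log_sub_sq (y i)).congr ?_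
  intro w _
  simp only [relEntropy, EuclideanSpace.real_norm_sq_eq, mul_sum, ← sum_sub_distrib]
  ring_nf

end RelEntropy

theorem add_mul_sq_le_of_isMinOn_prox {E : Type*} [NormedAddCommGroup E]
    [InnerProductSpace ℝ E] [CompleteSpace E] {s : Set E} {f h d : E → ℝ} {K : ℝ≥0} {β : ℝ}
    {x y : E}
    (hf : Differentiable ℝ f) (hfK : LipschitzWith K (gradient f)) (hh : ConvexOn ℝ s h)
    (hd : StrongConvexOn s 1 d) (hd_nonneg : ∀ w ∈ s, 0 ≤ d w) (hdy : d y = 0) (hβ : 0 < β)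
    (hx : x ∈ s) (hy : y ∈ s)
    (hmin : IsMinOn (fun w ↦ inner ℝ (gradient f y) w + h w + 1 / β * d w) s x) :
    f x + h x + (1 / β - K / 2) * ‖x - y‖ ^ 2 ≤ f y + h y := by
  have hprox : StrongConvexOn s (1 / β)
      fun w ↦ inner ℝ (gradient f y) w + h w + 1 / β * d w := by
    refine strongConvexOn_iff_convex.2 <|
      ((((innerSL ℝ (gradient f y)).toLinearMap.convexOn hh.1).add hh).add
        ((strongConvexOn_iff_convex.1 hd).smul (one_div_pos.2 hβ).le)).congr fun w _ ↦ ?_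
    simp only [Pi.add_apply, ContinuousLinearMap.coe_coe, innerSL_apply_apply, smul_eq_mul]
    ring
  have hdecrease := hprox.add_sq_le_of_isMinOn hx hy hmin
  have hpinsker : 1 / 2 * ‖x - y‖ ^ 2 ≤ d x := by
    simpa [hdy, norm_sub_rev] using hd.add_sq_le_of_isMinOn hy hx fun w hw ↦ hdy ▸ hd_nonneg w hw
  have hdescent := le_add_inner_gradient_add_sq_of_lipschitzWith hf hfK x y
  simp only [hdy, mul_zero, add_zero] at hdecrease
  rw [inner_sub_right] at hdescent
  have := mul_le_mul_of_nonneg_left hpinsker (one_div_pos.2 hβ).le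
  linarith

theorem one_div_mul_sum_range_le_of_add_mul_le {a d : ℕ → ℝ} {c m : ℝ} (hc : 0 < c)
    (hstep : ∀ t, a (t + 1) + c * d t ≤ a t) (hm : ∀ t, m ≤ a t) (T : ℕ) :
    1 / (T : ℝ) * ∑ t ∈ range T, d t ≤ (a 0 - m) / (T * c) := by
  have htele : c * ∑ t ∈ range T, d t ≤ a 0 - a T := by
    rw [mul_sum, ← sum_range_sub']
    exact sum_le_sum fun t _ ↦ by linarith [hstep t]
  calc 1 / (T : ℝ) * ∑ t ∈ range T, d t = (c * ∑ t ∈ range T, d t) / (T * c) := by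
        rw [mul_comm (T : ℝ) c, ← div_div, mul_div_cancel_left₀ _ hc.ne', one_div_mul_eq_div]
    _ ≤ (a 0 - m) / (T * c) := by gcongr; linarith [hm T]

theorem stmt_2_general (n : ℕ) (s : ℝ)
    (Z : Set (EuclideanSpace ℝ (Fin n))) (hZconv : Convex ℝ Z)
    (hZsub : Z ⊆ {z : EuclideanSpace ℝ (Fin n) | (∀ i, 0 < z i ∧ z i ≤ 1) ∧ ∑ i, z i = s})
    (f h : EuclideanSpace ℝ (Fin n) → ℝ)
    (L : ℝ) (hL : 0 ≤ L)
    (hf : Differentiable ℝ f)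
    (hfL : LipschitzWith L.toNNReal (gradient f))
    (hhconv : ConvexOn ℝ Set.univ h)
    (β : ℝ) (hβ : 0 < β) (hβL : L * β < 2)
    (D : EuclideanSpace ℝ (Fin n) → EuclideanSpace ℝ (Fin n) → ℝ)
    (hD : ∀ x y, D x y = ∑ i, x i * (Real.log (x i) - Real.log (y i)))
    (Fstar : ℝ) (hFstar : ∀ w ∈ Z, Fstar ≤ f w + h w)
    (z : ℕ → EuclideanSpace ℝ (Fin n)) (hzZ : ∀ t, z t ∈ Z)
    (hmin : ∀ t, ∀ w ∈ Z,
      inner ℝ (gradient f (z t)) (z (t + 1)) + h (z (t + 1)) + (1 / β) * D (z (t + 1)) (z t) ≤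
        (inner ℝ (gradient f (z t)) w + h w + (1 / β) * D w (z t) : ℝ)) :
    ∀ T : ℕ, 1 ≤ T →
      (1 / (T : ℝ)) * ∑ t ∈ Finset.range T, ‖z (t + 1) - z t‖ ^ 2 ≤
        (f (z 0) + h (z 0) - Fstar) / ((T : ℝ) * (1 / β - L / 2)) := by
  obtain rfl : D = relEntropy := funext₂ hD
  have hZbox : Z ⊆ {w | ∀ i, w i ∈ Set.Ioc 0 1} := fun w hw ↦ (hZsub hw).1
  have hnonneg : ∀ t, ∀ w ∈ Z, 0 ≤ relEntropy w (z t) := fun t w hw ↦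
    relEntropy_nonneg (fun i ↦ ((hZsub hw).1 i).1) (fun i ↦ ((hZsub (hzZ t)).1 i).1)
      ((hZsub hw).2.trans (hZsub (hzZ t)).2.symm)
  have hstep : ∀ t, f (z (t + 1)) + h (z (t + 1)) + (1 / β - L / 2) * ‖z (t + 1) - z t‖ ^ 2 ≤
      f (z t) + h (z t) := fun t ↦ by
    simpa only [Real.coe_toNNReal L hL] using add_mul_sq_le_of_isMinOn_prox hf hfL
      (hhconv.subset (Set.subset_univ Z) hZconv)
      ((strongConvexOn_relEntropy (z t)).subset hZbox hZconv) (hnonneg t) (relEntropy_self _)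
      hβ (hzZ (t + 1)) (hzZ t) (isMinOn_iff.2 (hmin t))
  have hrate : 0 < 1 / β - L / 2 := by
    rw [sub_pos, div_lt_div_iff₀ two_pos hβ]
    linarith
  intro T _
  exact one_div_mul_sum_range_le_of_add_mul_le hrate (fun t ↦ by linarith [hstep t])
    (fun t ↦ hFstar _ (hzZ t)) T

theorem stmt_2 (n : ℕ) (hn : 0 < n) (s : ℝ)
    (Z : Set (EuclideanSpace ℝ (Fin n))) (hZconv : Convex ℝ Z)
    (hZsub : Z ⊆ {z : EuclideanSpace ℝ (Fin n) | (∀ i, 0 < z i ∧ z i ≤ 1) ∧ ∑ i, z i = s})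
    (f h : EuclideanSpace ℝ (Fin n) → ℝ)
    (L : ℝ) (hL : 0 ≤ L)
    (hf : Differentiable ℝ f)
    (hfL : LipschitzWith L.toNNReal (gradient f))
    (U : Set (EuclideanSpace ℝ (Fin n))) (hU : IsOpen U) (hZU : Z ⊆ U)
    (hh : DifferentiableOn ℝ h U)
    (hhconv : ConvexOn ℝ Set.univ h)
    (β : ℝ) (hβ : 0 < β) (hβL : L * β < 2)
    (D : EuclideanSpace ℝ (Fin n) → EuclideanSpace ℝ (Fin n) → ℝ)
    (hD : ∀ x y, D x y = ∑ i, x i * (Real.log (x i) - Real.log (y i)))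
    (Fstar : ℝ) (hFstar : ∀ w ∈ Z, Fstar ≤ f w + h w)
    (z : ℕ → EuclideanSpace ℝ (Fin n)) (hzZ : ∀ t, z t ∈ Z)
    (hmin : ∀ t, ∀ w ∈ Z,
      inner ℝ (gradient f (z t)) (z (t + 1)) + h (z (t + 1)) + (1 / β) * D (z (t + 1)) (z t) ≤
        (inner ℝ (gradient f (z t)) w + h w + (1 / β) * D w (z t) : ℝ)) :
    ∀ T : ℕ, 1 ≤ T →
      (1 / (T : ℝ)) * ∑ t ∈ Finset.range T, ‖z (t + 1) - z t‖ ^ 2 ≤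
        (f (z 0) + h (z 0) - Fstar) / ((T : ℝ) * (1 / β - L / 2)) :=
  stmt_2_general n s Z hZconv hZsub f h L hL hf hfL hhconv β hβ hβL D hD Fstar hFstar z hzZ hmin
end

section
/- Let n be a positive natural number, λ ≥ 0, β > 0, c : Fin n → ℝ, and z₀ : Fin n → ℝ with z₀ i > 0 for all i. Define g on the open positive orthant {z : Fin n → ℝ | ∀ i, z i > 0} by g(z) = −(∑ i, c i * z i) + (λ + 1/β) * ∑ i, z i * Real.log (z i) − (1/β) * ∑ i, z i * Real.log (z₀ i). Then the point z⋆ given by z⋆ i = Real.exp ((β * c i + Real.log (z₀ i)) / (1 + λ * β) − 1) is the unique global minimizer of g on the positive orthant: g(z) > g(z⋆) for every z in the positive orthant with z ≠ z⋆. -/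
/-! The objective is separable: it is a sum of the scalar functions `t ↦ a t log t - d t` with
`a = λ + 1/β > 0` and `d = cᵢ + (log z₀ᵢ)/β`. Each of them is minimised exactly at `t = exp (d/a - 1)`,
which is the tangent-line inequality `x + 1 < exp x` at `x = d/a - 1 - log t`; rewriting `d/a` in
terms of `β` gives the closed form of `z⋆`. -/

open Finset Real

lemma Real.neg_exp_sub_one_lt_mul_log_sub_mul {t m : ℝ} (ht : 0 < t) (hne : t ≠ exp (m - 1)) :
    -exp (m - 1) < t * log t - m * t := by
  have hx : m - 1 - log t ≠ 0 := fun h ↦ hne <| by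
    rw [show m - 1 = log t by linarith, exp_log ht]
  have htangent : m - log t < exp (m - 1) / t := by
    have h := add_one_lt_exp hx
    rwa [exp_sub (m - 1), exp_log ht, show m - 1 - log t + 1 = m - log t by ring] at h
  have := mul_lt_mul_of_pos_right htangent ht
  rw [div_mul_cancel₀ _ ht.ne'] at this
  linarith

lemma Real.mul_mul_log_sub_mul_exp_lt {a d t : ℝ} (ha : 0 < a) (ht : 0 < t)
    (hne : t ≠ exp (d / a - 1)) :
    a * (exp (d / a - 1) * log (exp (d / a - 1))) - d * exp (d / a - 1)
      < a * (t * log t) - d * t := by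
  have hmin : a * (exp (d / a - 1) * log (exp (d / a - 1))) - d * exp (d / a - 1)
      = a * -exp (d / a - 1) := by
    rw [log_exp]; field_simp; ring
  have hscaled : a * (t * log t) - d * t = a * (t * log t - d / a * t) := by
    field_simp
  rw [hmin, hscaled]
  exact mul_lt_mul_of_pos_left (neg_exp_sub_one_lt_mul_log_sub_mul ht hne) ha

theorem stmt_7_general (n : ℕ) (lam β : ℝ) (hlam : 0 ≤ lam) (hβ : 0 < β)
    (c z₀ : Fin n → ℝ)
    (g : (Fin n → ℝ) → ℝ)
    (hg : ∀ z, g z = -(∑ i, c i * z i) + (lam + 1 / β) * ∑ i, z i * Real.log (z i)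
      - (1 / β) * ∑ i, z i * Real.log (z₀ i))
    (zstar : Fin n → ℝ)
    (hzstar : ∀ i, zstar i = Real.exp ((β * c i + Real.log (z₀ i)) / (1 + lam * β) - 1)) :
    ∀ z : Fin n → ℝ, (∀ i, 0 < z i) → z ≠ zstar → g z > g zstar := by
  intro z hz hne
  set a := lam + 1 / β
  have ha : 0 < a := by positivity
  set d : Fin n → ℝ := fun i ↦ c i + log (z₀ i) / β
  have hg_sep : ∀ w, g w = ∑ i, (a * (w i * log (w i)) - d i * w i) := fun w ↦ by
    rw [hg, mul_sum, mul_sum, ← sum_neg_distrib, ← sum_add_distrib, ← sum_sub_distrib]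
    congr 1; ext i; ring
  have hzstar' : ∀ i, zstar i = exp (d i / a - 1) := fun i ↦ by
    rw [hzstar]; congr 2; simp only [a, d]; field_simp; ring
  have hlt : ∀ i, z i ≠ zstar i →
      a * (zstar i * log (zstar i)) - d i * zstar i < a * (z i * log (z i)) - d i * z i :=
    fun i hi ↦ by
      rw [hzstar'] at hi ⊢
      exact mul_mul_log_sub_mul_exp_lt ha (hz i) hi
  obtain ⟨j, hj⟩ := Function.ne_iff.mp hne
  rw [hg_sep, hg_sep]
  refine sum_lt_sum (fun i _ ↦ ?_) ⟨j, mem_univ j, hlt j hj⟩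
  rcases eq_or_ne (z i) (zstar i) with h | h
  · rw [h]
  · exact (hlt i h).le

theorem stmt_7 (n : ℕ) (hn : 0 < n) (lam β : ℝ) (hlam : 0 ≤ lam) (hβ : 0 < β)
    (c z₀ : Fin n → ℝ) (hz₀ : ∀ i, 0 < z₀ i)
    (g : (Fin n → ℝ) → ℝ)
    (hg : ∀ z, g z = -(∑ i, c i * z i) + (lam + 1 / β) * ∑ i, z i * Real.log (z i)
      - (1 / β) * ∑ i, z i * Real.log (z₀ i))
    (zstar : Fin n → ℝ)
    (hzstar : ∀ i, zstar i = Real.exp ((β * c i + Real.log (z₀ i)) / (1 + lam * β) - 1)) :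
    ∀ z : Fin n → ℝ, (∀ i, 0 < z i) → z ≠ zstar → g z > g zstar :=
  stmt_7_general n lam β hlam hβ c z₀ g hg zstar hzstar
end

section
/- Let S be a nonempty finite type and E : S → ℝ. For λ > 0 define the Gibbs probability p λ x = Real.exp (−E x / λ) / ∑ y, Real.exp (−E y / λ). Let A = {y : S | E y = ⨅ y, E y} be the set of minimizers of E and let k = A.toFinset.card. Then for every x : S, as λ → 0 from the right (filter nhdsWithin 0 (Set.Ioi 0)), p λ x tends to 1/k if x ∈ A and tends to 0 if x ∉ A. In other words, the Gibbs distribution converges to the uniform distribution on the set of global minimizers of E. -/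
/-! Subtracting the minimum energy `m` from `E` multiplies numerator and denominator of the Gibbs
weight by the same factor `exp (m / λ)`. After the shift every term `exp (-(E y - m) / λ)` tends
to `1` at a minimizer and to `0` elsewhere as `λ → 0⁺`, so the denominator tends to the number of
minimizers. -/

open Finset Filter Topology Real

theorem exp_neg_div_div_sum_eq_sub {S : Type*} [Fintype S] (E : S → ℝ) (c lam : ℝ) (x : S) :
    exp (-E x / lam) / ∑ y, exp (-E y / lam) =
      exp (-(E x - c) / lam) / ∑ y, exp (-(E y - c) / lam) := by
  have hshift : ∀ y, exp (-(E y - c) / lam) = exp (-E y / lam) * exp (c / lam) := fun y => by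
    rw [← exp_add]
    ring_nf
  simp only [hshift, ← sum_mul, mul_div_mul_right _ _ (exp_ne_zero _)]

theorem tendsto_exp_neg_div_nhdsGT_zero {a : ℝ} (ha : 0 < a) :
    Tendsto (fun lam => exp (-a / lam)) (𝓝[>] 0) (𝓝 0) := by
  have : Tendsto (fun lam : ℝ => -a / lam) (𝓝[>] 0) atBot := by
    simpa only [div_eq_mul_inv] using
      tendsto_inv_nhdsGT_zero.const_mul_atTop_of_neg (neg_neg_of_pos ha)
  exact tendsto_exp_atBot.comp this

theorem tendsto_exp_neg_sub_iInf_div_nhdsGT_zero {S : Type*} [Finite S] (E : S → ℝ) (y : S) :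
    Tendsto (fun lam => exp (-(E y - ⨅ z, E z) / lam)) (𝓝[>] 0)
      (𝓝 (if E y = ⨅ z, E z then 1 else 0)) := by
  split_ifs with hy
  · simp only [hy, sub_self, neg_zero, zero_div, exp_zero, tendsto_const_nhds]
  · have hle : ⨅ z, E z ≤ E y := ciInf_le (Set.finite_range E).bddBelow y
    exact tendsto_exp_neg_div_nhdsGT_zero (sub_pos.mpr (hle.lt_of_ne' hy))

theorem tendsto_gibbs_nhdsGT_zero {S : Type*} [Fintype S] [Nonempty S] (E : S → ℝ) (x : S) :
    Tendsto (fun lam => exp (-E x / lam) / ∑ y, exp (-E y / lam)) (𝓝[>] 0)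
      (𝓝 ((if E x = ⨅ y, E y then 1 else 0) / #{y | E y = ⨅ z, E z})) := by
  set m := ⨅ y, E y
  obtain ⟨x₀, hx₀⟩ : ∃ x₀, E x₀ = m := exists_eq_ciInf_of_finite
  have hcard : (#{y | E y = m} : ℝ) ≠ 0 := by
    exact_mod_cast (card_pos.mpr ⟨x₀, mem_filter.mpr ⟨mem_univ _, hx₀⟩⟩).ne'
  have hden : Tendsto (fun lam => ∑ y, exp (-(E y - m) / lam)) (𝓝[>] 0)
      (𝓝 (#{y | E y = m} : ℝ)) := by
    rw [natCast_card_filter]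
    exact tendsto_finsetSum _ fun y _ => tendsto_exp_neg_sub_iInf_div_nhdsGT_zero E y
  simp only [exp_neg_div_div_sum_eq_sub E m]
  exact (tendsto_exp_neg_sub_iInf_div_nhdsGT_zero E x).div hden hcard

theorem stmt_9_general {S : Type*} [Fintype S] (E : S → ℝ)
    (p : ℝ → S → ℝ)
    (hp : ∀ lam > (0 : ℝ), ∀ x, p lam x = Real.exp (-E x / lam) / ∑ y, Real.exp (-E y / lam))
    (A : Set S) (hA : A = {y : S | E y = ⨅ y, E y})
    (k : ℕ) (hk : k = A.ncard) (x : S) :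
    (x ∈ A → Tendsto (fun lam => p lam x) (nhdsWithin 0 (Set.Ioi 0)) (nhds (1 / (k : ℝ)))) ∧
    (x ∉ A → Tendsto (fun lam => p lam x) (nhdsWithin 0 (Set.Ioi 0)) (nhds 0)) := by
  have : Nonempty S := ⟨x⟩
  have hk' : k = #{y | E y = ⨅ z, E z} := by
    rw [hk, hA, Set.ncard_eq_toFinset_card', Set.toFinset_ofPred]
  have hlim : Tendsto (fun lam => p lam x) (𝓝[>] 0)
      (𝓝 ((if E x = ⨅ y, E y then 1 else 0) / k)) := by
    rw [hk']
    refine (tendsto_gibbs_nhdsGT_zero E x).congr' ?_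
    filter_upwards [self_mem_nhdsWithin] with lam hlam
    exact (hp lam hlam x).symm
  subst hA
  refine ⟨fun hx => ?_, fun hx => ?_⟩
  · simpa only [if_pos (show E x = ⨅ y, E y from hx)] using hlim
  · simpa only [if_neg (show E x ≠ ⨅ y, E y from hx), zero_div] using hlim

theorem stmt_9 {S : Type*} [Fintype S] [Nonempty S] (E : S → ℝ)
    (p : ℝ → S → ℝ)
    (hp : ∀ lam > (0 : ℝ), ∀ x, p lam x = Real.exp (-E x / lam) / ∑ y, Real.exp (-E y / lam))
    (A : Set S) (hA : A = {y : S | E y = ⨅ y, E y})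
    (k : ℕ) (hk : k = A.ncard) (x : S) :
    (x ∈ A → Tendsto (fun lam => p lam x) (nhdsWithin 0 (Set.Ioi 0)) (nhds (1 / (k : ℝ)))) ∧
    (x ∉ A → Tendsto (fun lam => p lam x) (nhdsWithin 0 (Set.Ioi 0)) (nhds 0)) :=
  stmt_9_general E p hp A hA k hk x
end
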